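/- arXiv:1901.06741 — 2 statements merged into one kernel-verified Lean document; each statement's English description precedes it below -/
import Mathlib

section
/- Let ℓ ≥ 1 and L ≥ 1 be integers and q a prime power. Then every L-nice collection {V_1,…,V_m} of ℓ-dimensional subspaces of 𝔽_q^{2ℓ+1} satisfies (m − 1)·(q^ℓ − 1) ≤ L·(q^{ℓ+1} − 1). -/
/-- An `L`-nice collection of `ℓ`-dimensional subspaces of `F^{2ℓ+1}`:
all subspaces are `ℓ`-dimensional, any two distinct members intersect
trivially, and every coset `v + Vᵢ` with `v ∉ Vᵢ` meets at most `L` members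
of the collection. -/
def IsNice (F : Type*) [Field F] (ℓ L : ℕ) {m : ℕ}
    (V : Fin m → Submodule F (Fin (2 * ℓ + 1) → F)) : Prop :=
  (∀ i, Module.finrank F (V i) = ℓ) ∧
  (∀ i j : Fin m, i ≠ j → V i ⊓ V j = ⊥) ∧
  (∀ (i : Fin m) (v : Fin (2 * ℓ + 1) → F), v ∉ V i →
    Nat.card {j : Fin m // ∃ w ∈ V i, v + w ∈ V j} ≤ L)

/-!
Fix a member `Vᵢ` and work in the quotient `𝔽_q^{2ℓ+1} ⧸ Vᵢ`, which has `q^{ℓ+1}` elements. Since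
`Vⱼ ∩ Vᵢ = 0`, each other member `Vⱼ` maps injectively onto a subspace with `q^ℓ` elements, and a
nonzero point `v + Vᵢ` of the quotient lies in the image of `Vⱼ` exactly when the coset `v + Vᵢ`
meets `Vⱼ`, so it lies in at most `L` images. Double counting the incidences between the `m - 1`
images and the `q^{ℓ+1} - 1` nonzero points gives the bound.
-/

namespace Submodule

variable {R M : Type*} [Ring R] [AddCommGroup M] [Module R M]

theorem mkQ_mem_map_mkQ_iff {U W : Submodule R M} {v : M} :
    U.mkQ v ∈ W.map U.mkQ ↔ ∃ u ∈ U, v + u ∈ W := by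
  rw [← mem_comap, comap_map_mkQ, mem_sup]
  constructor
  · rintro ⟨u, hu, w, hw, rfl⟩
    exact ⟨-u, neg_mem hu, by simpa using hw⟩
  · rintro ⟨u, hu, hw⟩
    exact ⟨-u, neg_mem hu, v + u, hw, by abel⟩

theorem natCard_map_mkQ_of_inf_eq_bot {U W : Submodule R M} (h : W ⊓ U = ⊥) :
    Nat.card (W.map U.mkQ) = Nat.card W := by
  have hinj : Set.InjOn U.mkQ W :=
    LinearMap.disjoint_ker_iff_injOn.mp (by rwa [ker_mkQ, disjoint_iff])
  rw [← SetLike.coe_sort_coe, map_coe]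
  exact Nat.card_image_of_injOn hinj

end Submodule

open Finset Submodule in
theorem card_sub_one_mul_le_of_coset_bound {R M ι : Type*} [Ring R] [AddCommGroup M]
    [Module R M] [Finite M] [Fintype ι] (V : ι → Submodule R M) (i : ι) {N L : ℕ}
    (hdisj : ∀ j, j ≠ i → V j ⊓ V i = ⊥) (hcard : ∀ j, j ≠ i → Nat.card (V j) = N)
    (hcoset : ∀ v, v ∉ V i → Nat.card {j // ∃ w ∈ V i, v + w ∈ V j} ≤ L) :
    (Fintype.card ι - 1) * (N - 1) ≤ L * (Nat.card (M ⧸ V i) - 1) := by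
  classical
  have : Finite (M ⧸ V i) := Finite.of_surjective _ (V i).mkQ_surjective
  have : Fintype (M ⧸ V i) := Fintype.ofFinite _
  let incident (j : ι) (x : M ⧸ V i) : Prop := x ∈ (V j).map (V i).mkQ
  have himage : ∀ j ∈ univ.erase i, N - 1 ≤ #((univ.erase 0).bipartiteAbove incident j) := by
    intro j hj
    have hj : j ≠ i := ne_of_mem_erase hj
    rw [bipartiteAbove, filter_erase, card_erase_of_mem (mem_filter.mpr ⟨mem_univ _, zero_mem _⟩),
      ← Fintype.card_subtype, ← Nat.card_eq_fintype_card,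
      natCard_map_mkQ_of_inf_eq_bot (hdisj j hj), hcard j hj]
  have hpoint : ∀ x ∈ univ.erase 0, #((univ.erase i).bipartiteBelow incident x) ≤ L := by
    intro x hx
    obtain ⟨v, rfl⟩ := (V i).mkQ_surjective x
    have hv : v ∉ V i := by simpa using hx
    refine le_trans ?_ (hcoset v hv)
    rw [Nat.card_eq_fintype_card, Fintype.card_subtype]
    refine card_le_card fun j hj => ?_
    simp only [bipartiteBelow, mem_filter, mem_univ, true_and, incident] at hj ⊢
    exact mkQ_mem_map_mkQ_iff.mp hj.2
  simpa [card_erase_of_mem, Nat.card_eq_fintype_card, mul_comm L] using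
    card_mul_le_card_mul incident himage hpoint

theorem nice_collection_counting_bound_general (q ℓ L m : ℕ)
    (F : Type) [Field F] [Fintype F] (hq : Fintype.card F = q)
    (V : Fin m → Submodule F (Fin (2 * ℓ + 1) → F))
    (hnice : IsNice F ℓ L V) :
    (m - 1) * (q ^ ℓ - 1) ≤ L * (q ^ (ℓ + 1) - 1) := by
  obtain ⟨hdim, hdisj, hcoset⟩ := hnice
  rcases Nat.eq_zero_or_pos m with rfl | hm
  · simp
  let i : Fin m := ⟨0, hm⟩
  have hqF : Nat.card F = q := by rw [Nat.card_eq_fintype_card, hq]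
  have hcard (j : Fin m) : Nat.card (V j) = q ^ ℓ := by
    rw [Module.natCard_eq_pow_finrank (K := F), hqF, hdim j]
  have hquot : Nat.card ((Fin (2 * ℓ + 1) → F) ⧸ V i) = q ^ (ℓ + 1) := by
    rw [Module.natCard_eq_pow_finrank (K := F), hqF, Submodule.finrank_quotient,
      Module.finrank_fin_fun, hdim i]
    congr 1
    omega
  have key := card_sub_one_mul_le_of_coset_bound V i (fun j hj => hdisj j i hj)
    (fun j _ => hcard j) (hcoset i)
  rwa [Fintype.card_fin, hquot] at key

/-- Quantitative upper bound on the size of a nice collection: every `L`-nice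
collection of `ℓ`-dimensional subspaces of `𝔽_q^{2ℓ+1}` satisfies
`(m - 1)·(q^ℓ - 1) ≤ L·(q^{ℓ+1} - 1)`. -/
theorem nice_collection_counting_bound (q ℓ L m : ℕ) (hℓ : 1 ≤ ℓ) (hL : 1 ≤ L)
    (F : Type) [Field F] [Fintype F] (hq : Fintype.card F = q)
    (V : Fin m → Submodule F (Fin (2 * ℓ + 1) → F))
    (hnice : IsNice F ℓ L V) :
    (m - 1) * (q ^ ℓ - 1) ≤ L * (q ^ (ℓ + 1) - 1) :=
  nice_collection_counting_bound_general q ℓ L m F hq V hnice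
end

section
/- Let n, N, m, L, k be positive integers with k ≤ ⌊m/L⌋. Suppose for each i ∈ [n] we are given m pairwise disjoint subsets R_{i,1},…,R_{i,m} of [N], such that for all i ≠ j in [n] and every s ∈ [m], the set R_{i,s} has nonempty intersection with at most L of the sets R_{j,1},…,R_{j,m}. Then for every request function r : Fin k → [n] there exists a choice function φ : Fin k → [m], injective on each fiber of r, such that the k sets R_{r(t),φ(t)}, t ∈ Fin k, are pairwise disjoint. -/
/-!
Choose the recovering sets greedily, one request at a time. Each earlier choice rules out at most
`L` candidates for the current request: the sets it meets, when it serves another symbol, or just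
itself, when it serves the same symbol (whose recovering sets are pairwise disjoint). So fewer than
`k * L ≤ m` of the `m` candidates are ever ruled out.
-/

open Finset Function

theorem exists_pairwise_not_conflict {α σ : Type*} [Fintype σ] [DecidableEq σ]
    (C : α → σ → α → σ → Prop) [∀ i x j y, Decidable (C i x j y)]
    (hsymm : ∀ i x j y, C i x j y → C j y i x) {L : ℕ} (hL : 0 < L)
    (hC : ∀ i x j, #{y | C i x j y} ≤ L) {k : ℕ} (r : Fin k → α)
    (hk : k * L ≤ Fintype.card σ) :
    ∃ φ : Fin k → σ, Pairwise fun t t' => ¬ C (r t) (φ t) (r t') (φ t') := by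
  induction k with
  | zero => exact ⟨Fin.elim0, fun t => t.elim0⟩
  | succ k ih =>
    obtain ⟨φ, hφ⟩ := ih (Fin.tail r) (le_trans (Nat.mul_le_mul_right L k.le_succ) hk)
    let blocked : Finset σ := univ.biUnion fun t => {y | C (r t.succ) (φ t) (r 0) y}
    have hblocked : #blocked < #(univ : Finset σ) := calc
      #blocked ≤ #(univ : Finset (Fin k)) * L :=
        card_biUnion_le_card_mul _ _ _ fun t _ => hC _ _ _
      _ < (k + 1) * L := by rw [card_univ, Fintype.card_fin]; nlinarith
      _ ≤ _ := by rwa [card_univ]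
    obtain ⟨x, -, hx⟩ := exists_mem_notMem_of_card_lt_card hblocked
    have hfree (t : Fin k) : ¬ C (r t.succ) (φ t) (r 0) x := fun h =>
      hx (mem_biUnion.2 ⟨t, mem_univ _, mem_filter.2 ⟨mem_univ _, h⟩⟩)
    refine ⟨Fin.cons x φ, fun t t' hne => ?_⟩
    cases t using Fin.cases with
    | zero =>
      cases t' using Fin.cases with
      | zero => exact absurd rfl hne
      | succ t' => exact fun h => hfree t' (hsymm _ _ _ _ h)
    | succ t =>
      cases t' using Fin.cases with
      | zero => exact hfree t
      | succ t' => exact hφ fun h => hne (congrArg Fin.succ h)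

section Clash

variable {α σ β : Type*}

def Clash (R : α → σ → Finset β) (i : α) (x : σ) (j : α) (y : σ) : Prop :=
  (i = j ∧ x = y) ∨ ¬ Disjoint (R i x) (R j y)

instance [DecidableEq α] [DecidableEq σ] [DecidableEq β] (R : α → σ → Finset β)
    (i : α) (x : σ) (j : α) (y : σ) : Decidable (Clash R i x j y) :=
  inferInstanceAs (Decidable (_ ∨ _))

theorem Clash.symm {R : α → σ → Finset β} {i j : α} {x y : σ} (h : Clash R i x j y) :
    Clash R j y i x :=
  h.imp (fun ⟨hij, hxy⟩ => ⟨hij.symm, hxy.symm⟩) fun hd => by rwa [disjoint_comm]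

theorem card_filter_clash_le [Fintype σ] [DecidableEq α] [DecidableEq σ] [DecidableEq β]
    {R : α → σ → Finset β} {L : ℕ}
    (hdisj : ∀ i, Pairwise (Disjoint on (R i)))
    (hcross : ∀ i j, i ≠ j → ∀ x, #{y | ¬ Disjoint (R i x) (R j y)} ≤ L) (hL : 1 ≤ L)
    (i : α) (x : σ) (j : α) : #{y | Clash R i x j y} ≤ L := by
  by_cases hij : i = j
  · subst hij
    have hsub : ({y | Clash R i x i y} : Finset σ) ⊆ {x} := fun y hy => by
      by_contra hyx
      have hxy : x ≠ y := Ne.symm (notMem_singleton.1 hyx)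
      simp [Clash, hxy, hdisj i hxy] at hy
    exact (card_le_card hsub).trans (card_singleton x ▸ hL)
  · simpa only [Clash, hij, false_and, false_or] using hcross i j hij x

end Clash

theorem greedy_recovering_sets_general (n N m L k : ℕ) (hL : 1 ≤ L) (hkm : k ≤ m / L)
    (R : Fin n → Fin m → Finset (Fin N))
    (hdisj : ∀ (i : Fin n) (s₁ s₂ : Fin m), s₁ ≠ s₂ →
      Disjoint (R i s₁) (R i s₂))
    (hcross : ∀ (i j : Fin n), i ≠ j → ∀ s : Fin m,
      (Finset.univ.filter fun s' : Fin m => ¬ Disjoint (R i s) (R j s')).card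
        ≤ L) :
    ∀ r : Fin k → Fin n, ∃ φ : Fin k → Fin m,
      (∀ t₁ t₂ : Fin k, r t₁ = r t₂ → φ t₁ = φ t₂ → t₁ = t₂) ∧
      (∀ t₁ t₂ : Fin k, t₁ ≠ t₂ →
        Disjoint (R (r t₁) (φ t₁)) (R (r t₂) (φ t₂))) := by
  intro r
  have hkL : k * L ≤ Fintype.card (Fin m) := by
    rw [Fintype.card_fin]
    exact (Nat.le_div_iff_mul_le hL).1 hkm
  obtain ⟨φ, hφ⟩ := exists_pairwise_not_conflict (Clash R) (fun _ _ _ _ => Clash.symm) hL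
    (card_filter_clash_le (fun i _ _ => hdisj i _ _) hcross hL) r hkL
  refine ⟨φ, fun t₁ t₂ hr hx => ?_, fun t₁ t₂ hne => ?_⟩
  · by_contra hne
    exact hφ hne (Or.inl ⟨hr, hx⟩)
  · by_contra hd
    exact hφ hne (Or.inr hd)

/-- Greedy-selection lemma: suppose each of `n` symbols has `m` pairwise
disjoint recovering sets in `[N]`, and each recovering set of a symbol meets at
most `L` recovering sets of any other symbol. Then for every request
`r : Fin k → [n]` with `k ≤ ⌊m/L⌋` one can choose, injectively on each fiber
of `r`, one recovering set per request so that the chosen sets are pairwise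
disjoint. -/
theorem greedy_recovering_sets (n N m L k : ℕ) (hn : 1 ≤ n) (hN : 1 ≤ N)
    (hm : 1 ≤ m) (hL : 1 ≤ L) (hk : 1 ≤ k) (hkm : k ≤ m / L)
    (R : Fin n → Fin m → Finset (Fin N))
    (hdisj : ∀ (i : Fin n) (s₁ s₂ : Fin m), s₁ ≠ s₂ →
      Disjoint (R i s₁) (R i s₂))
    (hcross : ∀ (i j : Fin n), i ≠ j → ∀ s : Fin m,
      (Finset.univ.filter fun s' : Fin m => ¬ Disjoint (R i s) (R j s')).card
        ≤ L) :
    ∀ r : Fin k → Fin n, ∃ φ : Fin k → Fin m,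
      (∀ t₁ t₂ : Fin k, r t₁ = r t₂ → φ t₁ = φ t₂ → t₁ = t₂) ∧
      (∀ t₁ t₂ : Fin k, t₁ ≠ t₂ →
        Disjoint (R (r t₁) (φ t₁)) (R (r t₂) (φ t₂))) :=
  greedy_recovering_sets_general n N m L k hL hkm R hdisj hcross
end
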